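/- Under the standing hypotheses, for any two states φ and ψ on M one has |S(φ, M_1, …, M_m) − S(ψ, M_1, …, M_m)| ≤ 4 · ‖φ − ψ‖^{1/h}, where ‖φ − ψ‖ is the norm of the functional φ − ψ on M and S(τ, M_1, …, M_m) denotes the supremum of |I_τ|^{1/h} + |J_τ|^{1/h} over all choices of self-adjoint contractions A_{i,0}, A_{i,1} ∈ M_i (i = 1,…,m). In particular, the map τ ↦ S(τ, M_1, …, M_m) is norm continuous on the state space of M. -/

import Mathlib

open scoped ComplexOrder

/-- Product of `f` over a finite set of indices, taken in increasing index order.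
(In our applications the factors mutually commute, so the order is immaterial.) -/
noncomputable def ordProd {M : Type*} [Monoid M] {m : ℕ}
    (s : Finset (Fin m)) (f : Fin m → M) : M :=
  ((s.sort (· ≤ ·)).map f).prod

/-- The Bell-type quantity `S(τ, M₁, …, M_m)`: the supremum of
`|I_τ|^{1/h} + |J_τ|^{1/h}` over all choices of self-adjoint contractions
`A_{i,0}, A_{i,1} ∈ M_i`. -/
noncomputable def bellSup {M : Type*} [NormedRing M] [StarRing M] [CStarRing M]
    [CompleteSpace M] [NormedAlgebra ℂ M] [StarModule ℂ M]
    [PartialOrder M] [StarOrderedRing M] {m : ℕ}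
    (Msub : Fin m → StarSubalgebra ℂ M) (R : Finset (Fin m)) (h : ℕ)
    (τ : M →L[ℂ] ℂ) : ℝ :=
  sSup { s : ℝ | ∃ A0 A1 : Fin m → M,
    (∀ i, A0 i ∈ Msub i) ∧ (∀ i, A1 i ∈ Msub i) ∧
    (∀ i, IsSelfAdjoint (A0 i)) ∧ (∀ i, IsSelfAdjoint (A1 i)) ∧
    (∀ i, -1 ≤ A0 i ∧ A0 i ≤ 1) ∧ (∀ i, -1 ≤ A1 i ∧ A1 i ≤ 1) ∧
    s = ‖τ (ordProd R (fun i => A0 i + A1 i) * ordProd Rᶜ A0)‖ ^ (1 / (h : ℝ)) +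
        ‖τ (ordProd R (fun i => A0 i - A1 i) * ordProd Rᶜ A1)‖ ^ (1 / (h : ℝ)) }

/-!
Every observable entering `I_τ` or `J_τ` has norm at most `2 ^ h`, since each of the `h` factors
`A_{i,0} ± A_{i,1}` has norm at most `2` and the other factors are contractions. Hence
`|φ X| ≤ |ψ X| + 2 ^ h ‖φ - ψ‖` for such `X`, and subadditivity of `t ↦ t ^ (1 / h)` turns this
into `|φ X| ^ (1 / h) ≤ |ψ X| ^ (1 / h) + 2 ‖φ - ψ‖ ^ (1 / h)`. Adding the two terms and taking
suprema gives the Hölder estimate with constant `4`, which implies continuity.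
-/

open Filter Topology

lemma continuous_of_dist_le_mul_rpow {X Y : Type*} [PseudoMetricSpace X] [PseudoMetricSpace Y]
    {f : X → Y} {C p : ℝ} (hp : 0 < p) (hf : ∀ x y, dist (f x) (f y) ≤ C * dist x y ^ p) :
    Continuous f := by
  refine continuous_iff_continuousAt.2 fun x => tendsto_iff_dist_tendsto_zero.2 ?_
  have hbound : Tendsto (fun y => C * dist y x ^ p) (𝓝 x) (𝓝 0) := by
    have := ((continuous_id.dist (continuous_const (y := x))).rpow_const
      fun _ => Or.inr hp.le).tendsto x
    simpa [Real.zero_rpow hp.ne'] using this.const_mul C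
  exact squeeze_zero (fun _ => dist_nonneg) (fun y => hf y x) hbound

lemma ContinuousLinearMap.norm_apply_rpow_le {𝕜 E F : Type*} [NontriviallyNormedField 𝕜]
    [SeminormedAddCommGroup E] [NormedSpace 𝕜 E] [SeminormedAddCommGroup F] [NormedSpace 𝕜 F]
    {p : ℝ} (hp₀ : 0 ≤ p) (hp₁ : p ≤ 1) (φ ψ : E →L[𝕜] F) {x : E} {r : ℝ} (hx : ‖x‖ ≤ r) :
    ‖φ x‖ ^ p ≤ ‖ψ x‖ ^ p + (‖φ - ψ‖ * r) ^ p := by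
  have hdiff : ‖(φ - ψ) x‖ ≤ ‖φ - ψ‖ * r :=
    (φ - ψ).le_of_opNorm_le_of_le le_rfl hx
  have htri : ‖φ x‖ ≤ ‖ψ x‖ + ‖φ - ψ‖ * r := by
    calc ‖φ x‖ = ‖ψ x + (φ - ψ) x‖ := by simp
      _ ≤ ‖ψ x‖ + ‖φ - ψ‖ * r := (norm_add_le _ _).trans (by gcongr)
  calc ‖φ x‖ ^ p ≤ (‖ψ x‖ + ‖φ - ψ‖ * r) ^ p := Real.rpow_le_rpow (norm_nonneg _) htri hp₀
    _ ≤ ‖ψ x‖ ^ p + (‖φ - ψ‖ * r) ^ p :=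
      Real.rpow_add_le_add_rpow (norm_nonneg _) ((norm_nonneg _).trans hdiff) hp₀ hp₁

section

variable {M : Type*} [NormedRing M] [StarRing M] [CStarRing M]

lemma CStarRing.norm_one_le : ‖(1 : M)‖ ≤ 1 := by
  obtain _ | _ := subsingleton_or_nontrivial M
  · simp [Subsingleton.elim (1 : M) 0]
  · exact CStarRing.norm_one.le

lemma List.norm_prod_le_pow_length {l : List M} {c : ℝ} (hc : 0 ≤ c) (hl : ∀ x ∈ l, ‖x‖ ≤ c) :
    ‖l.prod‖ ≤ c ^ l.length := by
  induction l with
  | nil => simpa using CStarRing.norm_one_le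
  | cons a t ih =>
    rw [List.forall_mem_cons] at hl
    rw [List.prod_cons, List.length_cons, pow_succ']
    exact (norm_mul_le _ _).trans (mul_le_mul hl.1 (ih hl.2) (norm_nonneg _) hc)

lemma norm_ordProd_le {m : ℕ} (s : Finset (Fin m)) {f : Fin m → M} {c : ℝ} (hc : 0 ≤ c)
    (hf : ∀ i ∈ s, ‖f i‖ ≤ c) : ‖ordProd s f‖ ≤ c ^ s.card := by
  rw [ordProd, ← Finset.length_sort (· ≤ ·), ← List.length_map f]
  refine List.norm_prod_le_pow_length hc ?_
  simpa [List.forall_mem_map] using hf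

lemma norm_ordProd_mul_ordProd_compl_le {m : ℕ} (R : Finset (Fin m)) {f g : Fin m → M}
    (hf : ∀ i, ‖f i‖ ≤ 2) (hg : ∀ i, ‖g i‖ ≤ 1) :
    ‖ordProd R f * ordProd Rᶜ g‖ ≤ 2 ^ R.card :=
  calc ‖ordProd R f * ordProd Rᶜ g‖ ≤ 2 ^ R.card * 1 ^ Rᶜ.card :=
        (norm_mul_le _ _).trans <| mul_le_mul (norm_ordProd_le R zero_le_two fun i _ => hf i)
          (norm_ordProd_le Rᶜ zero_le_one fun i _ => hg i) (norm_nonneg _) (by positivity)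
    _ = 2 ^ R.card := by rw [one_pow, mul_one]

variable [NormedAlgebra ℂ M] {m : ℕ}

/-- `|I_τ| ^ (1 / h) + |J_τ| ^ (1 / h)` for the observables `A0`, `A1`. -/
noncomputable def bellValue (R : Finset (Fin m)) (h : ℕ) (τ : M →L[ℂ] ℂ) (A0 A1 : Fin m → M) :
    ℝ :=
  ‖τ (ordProd R (fun i => A0 i + A1 i) * ordProd Rᶜ A0)‖ ^ (1 / (h : ℝ)) +
    ‖τ (ordProd R (fun i => A0 i - A1 i) * ordProd Rᶜ A1)‖ ^ (1 / (h : ℝ))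

lemma bellValue_le_add {R : Finset (Fin m)} {h : ℕ} (hh : h ≠ 0) (hcard : R.card = h)
    {A0 A1 : Fin m → M} (hA0 : ∀ i, ‖A0 i‖ ≤ 1) (hA1 : ∀ i, ‖A1 i‖ ≤ 1) (φ ψ : M →L[ℂ] ℂ) :
    bellValue R h φ A0 A1 ≤ bellValue R h ψ A0 A1 + 4 * ‖φ - ψ‖ ^ (1 / (h : ℝ)) := by
  have hp₀ : 0 ≤ 1 / (h : ℝ) := by positivity
  have hp₁ : 1 / (h : ℝ) ≤ 1 := div_le_one_of_le₀ (by exact_mod_cast Nat.one_le_iff_ne_zero.2 hh)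
    (Nat.cast_nonneg h)
  have hroot : (‖φ - ψ‖ * 2 ^ h) ^ (1 / (h : ℝ)) = 2 * ‖φ - ψ‖ ^ (1 / (h : ℝ)) := by
    rw [Real.mul_rpow (norm_nonneg _) (by positivity), one_div,
      Real.pow_rpow_inv_natCast zero_le_two hh, mul_comm]
  have hterm : ∀ f g : Fin m → M, (∀ i, ‖f i‖ ≤ 2) → (∀ i, ‖g i‖ ≤ 1) →
      ‖φ (ordProd R f * ordProd Rᶜ g)‖ ^ (1 / (h : ℝ)) ≤
        ‖ψ (ordProd R f * ordProd Rᶜ g)‖ ^ (1 / (h : ℝ)) + 2 * ‖φ - ψ‖ ^ (1 / (h : ℝ)) :=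
    fun f g hf hg => hroot ▸
      φ.norm_apply_rpow_le hp₀ hp₁ ψ (hcard ▸ norm_ordProd_mul_ordProd_compl_le R hf hg)
  have hI := hterm (fun i => A0 i + A1 i) A0
    (fun i => (norm_add_le _ _).trans (by linarith [hA0 i, hA1 i])) hA0
  have hJ := hterm (fun i => A0 i - A1 i) A1
    (fun i => (norm_sub_le _ _).trans (by linarith [hA0 i, hA1 i])) hA1
  unfold bellValue
  linarith

variable [CompleteSpace M] [StarModule ℂ M] [PartialOrder M] [StarOrderedRing M]

lemma IsSelfAdjoint.norm_le_one {a : M} (ha : IsSelfAdjoint a) (h₁ : -1 ≤ a)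
    (h₂ : a ≤ 1) : ‖a‖ ≤ 1 := by
  let _ : CStarAlgebra M := {}
  obtain _ | _ := subsingleton_or_nontrivial M
  · simp [Subsingleton.elim a 0]
  have hle : ∀ x ∈ spectrum ℝ a, x ≤ 1 :=
    (le_algebraMap_iff_spectrum_le ha).1 (by simpa using h₂)
  have hge : ∀ x ∈ spectrum ℝ a, -1 ≤ x :=
    (algebraMap_le_iff_le_spectrum ha).1 (by simpa using h₁)
  rcases CStarAlgebra.norm_or_neg_norm_mem_spectrum ha with hmem | hmem
  · exact hle _ hmem
  · linarith [hge _ hmem]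

def bellSet (Msub : Fin m → StarSubalgebra ℂ M) (R : Finset (Fin m)) (h : ℕ)
    (τ : M →L[ℂ] ℂ) : Set ℝ :=
  { s : ℝ | ∃ A0 A1 : Fin m → M,
    (∀ i, A0 i ∈ Msub i) ∧ (∀ i, A1 i ∈ Msub i) ∧
    (∀ i, IsSelfAdjoint (A0 i)) ∧ (∀ i, IsSelfAdjoint (A1 i)) ∧
    (∀ i, -1 ≤ A0 i ∧ A0 i ≤ 1) ∧ (∀ i, -1 ≤ A1 i ∧ A1 i ≤ 1) ∧
    s = bellValue R h τ A0 A1 }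

variable {Msub : Fin m → StarSubalgebra ℂ M} {R : Finset (Fin m)} {h : ℕ}

omit [CStarRing M] [CompleteSpace M] in
lemma bellSet_nonempty (τ : M →L[ℂ] ℂ) : (bellSet Msub R h τ).Nonempty :=
  ⟨_, 0, 0, fun _ => zero_mem _, fun _ => zero_mem _, fun _ => .zero M, fun _ => .zero M,
    fun _ => ⟨neg_nonpos.2 zero_le_one, zero_le_one⟩,
    fun _ => ⟨neg_nonpos.2 zero_le_one, zero_le_one⟩, rfl⟩

lemma forall_bellSet_le (hh : h ≠ 0) (hcard : R.card = h) (φ ψ : M →L[ℂ] ℂ) :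
    ∀ s ∈ bellSet Msub R h φ, ∃ t ∈ bellSet Msub R h ψ, s ≤ t + 4 * ‖φ - ψ‖ ^ (1 / (h : ℝ)) := by
  rintro _ ⟨A0, A1, hm0, hm1, hsa0, hsa1, hb0, hb1, rfl⟩
  exact ⟨_, ⟨A0, A1, hm0, hm1, hsa0, hsa1, hb0, hb1, rfl⟩, bellValue_le_add hh hcard
    (fun i => (hsa0 i).norm_le_one (hb0 i).1 (hb0 i).2)
    (fun i => (hsa1 i).norm_le_one (hb1 i).1 (hb1 i).2) φ ψ⟩

lemma bddAbove_bellSet (hh : h ≠ 0) (hcard : R.card = h) (τ : M →L[ℂ] ℂ) :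
    BddAbove (bellSet Msub R h τ) := by
  refine ⟨4 * ‖τ‖ ^ (1 / (h : ℝ)), fun s hs => ?_⟩
  -- compare with the zero functional, all of whose Bell values vanish
  obtain ⟨_, ⟨A0, A1, -, -, -, -, -, -, rfl⟩, hst⟩ := forall_bellSet_le hh hcard τ 0 s hs
  have hp : (h : ℝ)⁻¹ ≠ 0 := by positivity
  simpa [bellValue, Real.zero_rpow hp] using hst

variable (Msub)

lemma bellSup_eq_sSup_bellSet (τ : M →L[ℂ] ℂ) : bellSup Msub R h τ = sSup (bellSet Msub R h τ) :=
  rfl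

lemma bellSup_le_add (hh : h ≠ 0) (hcard : R.card = h) (φ ψ : M →L[ℂ] ℂ) :
    bellSup Msub R h φ ≤ bellSup Msub R h ψ + 4 * ‖φ - ψ‖ ^ (1 / (h : ℝ)) := by
  rw [bellSup_eq_sSup_bellSet, bellSup_eq_sSup_bellSet]
  refine csSup_le (bellSet_nonempty φ) fun s hs => ?_
  obtain ⟨t, ht, hst⟩ := forall_bellSet_le hh hcard φ ψ s hs
  exact hst.trans (add_le_add (le_csSup (bddAbove_bellSet hh hcard ψ) ht) le_rfl)

lemma abs_bellSup_sub_le (hh : h ≠ 0) (hcard : R.card = h) (φ ψ : M →L[ℂ] ℂ) :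
    |bellSup Msub R h φ - bellSup Msub R h ψ| ≤ 4 * ‖φ - ψ‖ ^ (1 / (h : ℝ)) := by
  have h₁ := bellSup_le_add Msub hh hcard φ ψ
  have h₂ := bellSup_le_add Msub hh hcard ψ φ
  rw [norm_sub_rev] at h₂
  exact abs_sub_le_iff.2 ⟨by linarith, by linarith⟩

end

theorem bellSup_norm_continuous_general
    {M : Type*} [NormedRing M] [StarRing M] [CStarRing M] [CompleteSpace M]
    [NormedAlgebra ℂ M] [StarModule ℂ M] [PartialOrder M] [StarOrderedRing M]
    {m : ℕ}
    (Msub : Fin m → StarSubalgebra ℂ M)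
    (R : Finset (Fin m)) (h : ℕ) (hh : 2 ≤ h) (hcard : R.card = h) :
    (∀ φ ψ : M →L[ℂ] ℂ,
      (∀ a : M, 0 ≤ φ (star a * a)) → φ 1 = 1 →
      (∀ a : M, 0 ≤ ψ (star a * a)) → ψ 1 = 1 →
      |bellSup Msub R h φ - bellSup Msub R h ψ| ≤ 4 * ‖φ - ψ‖ ^ (1 / (h : ℝ))) ∧
    Continuous (fun τ : {τ : M →L[ℂ] ℂ // (∀ a : M, 0 ≤ τ (star a * a)) ∧ τ 1 = 1} =>
      bellSup Msub R h τ.1) := by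
  have hh₀ : h ≠ 0 := by omega
  have hp : 0 < 1 / (h : ℝ) := one_div_pos.2 (by exact_mod_cast Nat.pos_of_ne_zero hh₀)
  have hHolder (φ ψ : M →L[ℂ] ℂ) := abs_bellSup_sub_le Msub hh₀ hcard φ ψ
  refine ⟨fun φ ψ _ _ _ _ => hHolder φ ψ, ?_⟩
  have hcont : Continuous (bellSup Msub R h) :=
    continuous_of_dist_le_mul_rpow hp fun φ ψ => by
      rw [Real.dist_eq, dist_eq_norm]
      exact hHolder φ ψ
  exact hcont.comp continuous_subtype_val

theorem bellSup_norm_continuous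
    {M : Type*} [NormedRing M] [StarRing M] [CStarRing M] [CompleteSpace M]
    [NormedAlgebra ℂ M] [StarModule ℂ M] [PartialOrder M] [StarOrderedRing M]
    {m : ℕ} (hm : 2 ≤ m)
    (Msub : Fin m → StarSubalgebra ℂ M)
    (hcomm : ∀ i j : Fin m, i ≠ j → ∀ x ∈ Msub i, ∀ y ∈ Msub j, Commute x y)
    (R : Finset (Fin m)) (h : ℕ) (hh : 2 ≤ h) (hcard : R.card = h) :
    (∀ φ ψ : M →L[ℂ] ℂ,
      (∀ a : M, 0 ≤ φ (star a * a)) → φ 1 = 1 →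
      (∀ a : M, 0 ≤ ψ (star a * a)) → ψ 1 = 1 →
      |bellSup Msub R h φ - bellSup Msub R h ψ| ≤ 4 * ‖φ - ψ‖ ^ (1 / (h : ℝ))) ∧
    Continuous (fun τ : {τ : M →L[ℂ] ℂ // (∀ a : M, 0 ≤ τ (star a * a)) ∧ τ 1 = 1} =>
      bellSup Msub R h τ.1) :=
  bellSup_norm_continuous_general Msub R h hh hcard
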